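/- Define b^{(l)}_{w₁,0} = Γ(1+(w₁α₁+β+1)/α₂)/Γ(β₂/α₂) · Γ(l+β₂/α₂)/Γ(l+1+(w₁α₁+β+1)/α₂). Then ∑_{l=1}^∞ b^{(l)}_{w₁,0} = β₂/(w₁α₁+β₁+1). -/

import Mathlib

open Real
open Filter Finset Topology

/-!
With `c = β₂/α₂` and `e = (w₁α₁ + β₁ + 1)/α₂`, the summand is `Γ(1+c+e)/Γ(c)` times
`Γ(l+c)/Γ(l+c+e+1)`. For `G l = Γ(l+c)/Γ(l+c+e)` the functional equation of `Γ` gives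
`G l - G (l+1) = e · Γ(l+c)/Γ(l+c+e+1)`, so the series telescopes to `G 1 / e`, provided
`G l → 0`. That holds because `G (l+1) = G l · (1 - e/(l+c+e))` and `∑ e/(l+c+e)` diverges.
Finally `Γ(1+c+e)/Γ(c) · G 1 / e = c/e`.
-/

theorem hasSum_sub_succ_of_antitone {f : ℕ → ℝ} {l : ℝ} (hf : Antitone f)
    (hl : Tendsto f atTop (𝓝 l)) : HasSum (fun n => f n - f (n + 1)) (f 0 - l) := by
  refine (hasSum_iff_tendsto_nat_of_nonneg (fun n => sub_nonneg.2 (hf n.le_succ)) _).2 ?_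
  simp_rw [Finset.sum_range_sub']
  exact tendsto_const_nhds.sub hl

theorem le_mul_exp_neg_sum_of_succ_eq_mul_one_sub {F a : ℕ → ℝ} (hF : ∀ n, 0 ≤ F n)
    (hstep : ∀ n, F (n + 1) = F n * (1 - a n)) (n : ℕ) :
    F n ≤ F 0 * exp (-∑ k ∈ range n, a k) := by
  induction n with
  | zero => simp
  | succ n ih =>
    calc F (n + 1) = F n * (1 - a n) := hstep n
      _ ≤ F n * exp (-a n) := by
        gcongr
        · exact hF n
        · linarith [add_one_le_exp (-a n)]
      _ ≤ F 0 * exp (-∑ k ∈ range n, a k) * exp (-a n) := by gcongr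
      _ = F 0 * exp (-∑ k ∈ range (n + 1), a k) := by
        rw [sum_range_succ, neg_add, exp_add, mul_assoc]

theorem tendsto_zero_of_succ_eq_mul_one_sub {F a : ℕ → ℝ} (hF : ∀ n, 0 ≤ F n)
    (hstep : ∀ n, F (n + 1) = F n * (1 - a n))
    (ha : Tendsto (fun n => ∑ k ∈ range n, a k) atTop atTop) : Tendsto F atTop (𝓝 0) := by
  have hbound : Tendsto (fun n => F 0 * exp (-∑ k ∈ range n, a k)) atTop (𝓝 0) := by
    simpa using (tendsto_exp_atBot.comp (tendsto_neg_atTop_atBot.comp ha)).const_mul (F 0)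
  exact squeeze_zero hF (le_mul_exp_neg_sum_of_succ_eq_mul_one_sub hF hstep) hbound

theorem tendsto_sum_range_div_nat_add_atTop {e x : ℝ} (he : 0 < e) (hx : 0 < x) :
    Tendsto (fun n => ∑ k ∈ range n, e / (k + x)) atTop atTop := by
  refine (not_summable_iff_tendsto_nat_atTop_of_nonneg fun k => by positivity).1 ?_
  have h := mt (Real.summable_one_div_nat_add_rpow x 1).1 (lt_irrefl 1)
  rw [← summable_mul_left_iff he.ne'] at h
  refine fun hs => h (hs.congr fun k => ?_)
  rw [rpow_one, abs_of_pos (by positivity), mul_one_div]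

theorem Gamma_add_one_div_Gamma_add_add_one {x e : ℝ} (hx : 0 < x) (hxe : 0 < x + e) :
    Gamma (x + 1) / Gamma (x + e + 1) = Gamma x / Gamma (x + e) * (1 - e / (x + e)) := by
  rw [Gamma_add_one hx.ne', Gamma_add_one hxe.ne']
  have := (Gamma_pos_of_pos hxe).ne'
  field_simp
  ring

theorem Gamma_div_Gamma_add_sub_Gamma_add_one_div {x e : ℝ} (hx : 0 < x) (hxe : 0 < x + e) :
    Gamma x / Gamma (x + e) - Gamma (x + 1) / Gamma (x + e + 1) =
      e * (Gamma x / Gamma (x + e + 1)) := by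
  rw [Gamma_add_one_div_Gamma_add_add_one hx hxe, Gamma_add_one hxe.ne']
  have := (Gamma_pos_of_pos hxe).ne'
  field_simp
  ring

theorem hasSum_Gamma_add_div_Gamma_add_add_one {c e : ℝ} (hc : 0 < c) (he : 0 < e) :
    HasSum (fun n : ℕ => Gamma (n + c) / Gamma (n + c + e + 1))
      (Gamma c / (e * Gamma (c + e))) := by
  set G : ℕ → ℝ := fun n => Gamma (n + c) / Gamma (n + c + e)
  have hG : ∀ n, 0 ≤ G n := fun n =>
    div_nonneg (Gamma_pos_of_pos (by positivity)).le (Gamma_pos_of_pos (by positivity)).le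
  have hstep : ∀ n, G (n + 1) = G n * (1 - e / (n + c + e)) := fun n => by
    simp only [G, Nat.cast_succ, add_right_comm _ (1 : ℝ)]
    exact Gamma_add_one_div_Gamma_add_add_one (x := n + c) (e := e)
      (by positivity) (by positivity)
  have hanti : Antitone G := antitone_nat_of_succ_le fun n => by
    rw [hstep]
    exact mul_le_of_le_one_right (hG n) (sub_le_self _ (by positivity))
  have hlim : Tendsto G atTop (𝓝 0) :=
    tendsto_zero_of_succ_eq_mul_one_sub hG hstep
      (by simpa only [add_assoc] using tendsto_sum_range_div_nat_add_atTop he (add_pos hc he))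
  have hsum := hasSum_sub_succ_of_antitone hanti hlim
  have hterm : ∀ n : ℕ, G n - G (n + 1) = e * (Gamma (n + c) / Gamma (n + c + e + 1)) :=
      fun n => by
    simp only [G, Nat.cast_succ, add_right_comm _ (1 : ℝ)]
    exact Gamma_div_Gamma_add_sub_Gamma_add_one_div (x := n + c) (e := e)
      (by positivity) (by positivity)
  have hval : G 0 - 0 = e * (Gamma c / (e * Gamma (c + e))) := by
    simp only [G, Nat.cast_zero, zero_add, sub_zero]
    field_simp
  rw [funext hterm, hval] at hsum
  exact (hasSum_mul_left_iff he.ne').1 hsum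

theorem sum_b0_coeff_general (α₁ α₂ β₁ β₂ : ℝ) (hα₁ : 0 < α₁) (hα₂ : 0 < α₂)
    (hβ₁ : 0 < β₁) (hβ₂ : 0 < β₂) (w₁ : ℕ)
    (b : ℕ → ℝ)
    (hb : ∀ l : ℕ,
      b l = Real.Gamma (1 + ((w₁ : ℝ) * α₁ + (β₁ + β₂) + 1) / α₂) /
          Real.Gamma (β₂ / α₂) *
        (Real.Gamma ((l : ℝ) + β₂ / α₂) /
          Real.Gamma ((l : ℝ) + 1 + ((w₁ : ℝ) * α₁ + (β₁ + β₂) + 1) / α₂))) :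
    HasSum (fun k : ℕ => b (k + 1))
      (β₂ / ((w₁ : ℝ) * α₁ + β₁ + 1)) := by
  set c := β₂ / α₂
  set e := ((w₁ : ℝ) * α₁ + β₁ + 1) / α₂
  have hc : 0 < c := by positivity
  have he : 0 < e := by positivity
  have hd : ((w₁ : ℝ) * α₁ + (β₁ + β₂) + 1) / α₂ = c + e := by
    simp only [c, e]
    ring
  have hterm : ∀ k : ℕ, b (k + 1) = Gamma (c + 1 + e) / Gamma c *
      (Gamma (k + (c + 1)) / Gamma (k + (c + 1) + e + 1)) := fun k => by
    rw [hb, hd]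
    push_cast
    ring_nf
  have hval : Gamma (c + 1 + e) / Gamma c * (Gamma (c + 1) / (e * Gamma (c + 1 + e))) =
      β₂ / ((w₁ : ℝ) * α₁ + β₁ + 1) := by
    rw [Gamma_add_one hc.ne']
    have := (Gamma_pos_of_pos hc).ne'
    have := (Gamma_pos_of_pos (by positivity : 0 < c + 1 + e)).ne'
    simp only [c, e]
    field_simp
  rw [funext hterm, ← hval]
  exact (hasSum_Gamma_add_div_Gamma_add_add_one (add_pos hc one_pos) he).mul_left _

theorem sum_b0_coeff (α₁ α₂ β₁ β₂ : ℝ) (hα₁ : 0 < α₁) (hα₂ : 0 < α₂)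
    (hβ₁ : 0 < β₁) (hβ₂ : 0 < β₂) (w₁ : ℕ) (hw₁ : 1 ≤ w₁)
    (b : ℕ → ℝ)
    (hb : ∀ l : ℕ,
      b l = Real.Gamma (1 + ((w₁ : ℝ) * α₁ + (β₁ + β₂) + 1) / α₂) /
          Real.Gamma (β₂ / α₂) *
        (Real.Gamma ((l : ℝ) + β₂ / α₂) /
          Real.Gamma ((l : ℝ) + 1 + ((w₁ : ℝ) * α₁ + (β₁ + β₂) + 1) / α₂))) :
    HasSum (fun k : ℕ => b (k + 1))
      (β₂ / ((w₁ : ℝ) * α₁ + β₁ + 1)) :=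
  sum_b0_coeff_general α₁ α₂ β₁ β₂ hα₁ hα₂ hβ₁ hβ₂ w₁ b hb
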